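/- Fix t ∈ ℝ and bounded z ∈ ℂ, τ ∈ ℝ. Let φ(r₁,r₂,r₃) = A(exp(r₁X̃₁+r₂X̃₂+r₃X̃₃)·n(z,τ)·a(t)) where A is the Iwasawa A-projection on U(2,1). Then the gradient at the origin satisfies ∇φ(0,0,0) = (2 Im(z), −2 Re(z), τ). In particular |∇φ(0,0,0)|² = 4|z|² + τ². -/

import Mathlib

open Matrix Complex

noncomputable section

def Jmat : Matrix (Fin 3) (Fin 3) ℂ := !![0,0,1;0,1,0;1,0,0]

def nmat (z : ℂ) (τ : ℝ) : Matrix (Fin 3) (Fin 3) ℂ :=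
  !![1, (Real.sqrt 2 : ℂ) * z, (τ : ℂ) * I - (normSq z : ℂ);
     0, 1, -(Real.sqrt 2 : ℂ) * starRingEnd ℂ z;
     0, 0, 1]

def amat (t : ℝ) : Matrix (Fin 3) (Fin 3) ℂ :=
  !![(Real.exp (t/2) : ℂ), 0, 0; 0, 1, 0; 0, 0, (Real.exp (-t/2) : ℂ)]

def U21 : Set (Matrix (Fin 3) (Fin 3) ℂ) := {g | gᴴ * Jmat * g = Jmat}

def Nset : Set (Matrix (Fin 3) (Fin 3) ℂ) := {x | ∃ z τ, x = nmat z τ}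

def K0 : Set (Matrix (Fin 3) (Fin 3) ℂ) := {g | gᴴ * Jmat * g = Jmat ∧ gᴴ * g = 1}

def Xt1 : Matrix (Fin 3) (Fin 3) ℂ :=
  ((Real.sqrt 2 : ℂ))⁻¹ • !![0, I, 0; I, 0, I; 0, I, 0]

def Xt2 : Matrix (Fin 3) (Fin 3) ℂ :=
  ((Real.sqrt 2 : ℂ))⁻¹ • !![0, -1, 0; 1, 0, 1; 0, -1, 0]

def Xt3 : Matrix (Fin 3) (Fin 3) ℂ :=
  (2 : ℂ)⁻¹ • !![I, 0, I; 0, -2*I, 0; I, 0, I]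

/-! Write `g = n · a(A g) · k`. Since `n` is upper unitriangular, the bottom row of `g` is
`e^{-A(g)/2}` times the bottom row of the unitary `k`, so `e^{-A(g)} = ‖e₃ᵀ g‖²`. For
`g = exp(rX) · n(z,τ) · a(t)` with `X` in the Lie algebra of `U(2,1)`, the bottom row of
`n(z,τ) a(t)` is `e^{-t/2} e₃`, and differentiating `-log ‖e₃ᵀ exp(rX) n(z,τ) a(t)‖²` at `r = 0`
gives `-2 Re (X n(z,τ))₃₃`, which is read off for `X = X̃₁, X̃₂, X̃₃`. -/

open NormedSpace

attribute [local instance] Matrix.linftyOpNormedRing Matrix.linftyOpNormedAlgebra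

section

variable {m : Type*} [Fintype m] [DecidableEq m]

theorem conjTranspose_exp_mul_mul_exp {J X : Matrix m m ℂ} (hX : Xᴴ * J = -(J * X)) :
    (exp X)ᴴ * J * exp X = J := by
  have hJ : J * exp (-X) = exp Xᴴ * J :=
    SemiconjBy.exp_right (by rw [SemiconjBy, mul_neg, ← hX])
  rw [← exp_conjTranspose, ← hJ, mul_assoc,
    ← Matrix.exp_add_of_commute _ _ (Commute.refl X).neg_left, neg_add_cancel, NormedSpace.exp_zero, mul_one]

theorem sum_normSq_apply_eq_one {k : Matrix m m ℂ} (hk : kᴴ * k = 1) (i : m) :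
    ∑ j, normSq (k i j) = 1 := by
  have h : (k * kᴴ) i i = (1 : Matrix m m ℂ) i i := by rw [mul_eq_one_comm.mp hk]
  simp only [mul_apply, conjTranspose_apply, one_apply_eq, RCLike.star_def, mul_conj] at h
  exact_mod_cast h

theorem hasDerivAt_exp_smul_mul_apply (X M : Matrix m m ℂ) (i j : m) :
    HasDerivAt (fun r : ℝ => (exp (r • X) * M) i j) ((X * M) i j) 0 := by
  have hE : HasDerivAt (fun r : ℝ => exp (r • X) * M) (X * M) 0 := by
    have h := (hasDerivAt_exp_smul_const (𝕂 := ℝ) X 0).mul_const M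
    rw [zero_smul, NormedSpace.exp_zero, one_mul] at h
    exact h
  exact (LinearMap.toContinuousLinearMap (entryLinearMap ℝ ℂ i j)).hasFDerivAt.comp_hasDerivAt
    0 hE

theorem hasDerivAt_sum_normSq_exp_smul_mul_apply (X M : Matrix m m ℂ) (i : m) :
    HasDerivAt (fun r : ℝ => ∑ j, normSq ((exp (r • X) * M) i j))
      (∑ j, 2 * ((X * M) i j * starRingEnd ℂ (M i j)).re) 0 := by
  refine HasDerivAt.fun_sum fun j _ => ?_
  simpa [← Complex.sq_norm, Complex.inner] using (hasDerivAt_exp_smul_mul_apply X M i j).norm_sq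

theorem hasDerivAt_neg_log_sum_normSq_exp_smul_mul {X M : Matrix m m ℂ} {i : m} {c : ℝ}
    (hc : c ≠ 0) (hM : ∀ j, M i j = c * (1 : Matrix m m ℂ) i j) :
    HasDerivAt (fun r : ℝ => -Real.log (∑ j, normSq ((exp (r • X) * M) i j)))
      (-(2 * ((X * M) i i).re / c)) 0 := by
  have hsum : ∑ j, normSq ((exp ((0 : ℝ) • X) * M) i j) = c ^ 2 := by
    simp [hM, one_apply, apply_ite, sq]
  have hderiv :
      ∑ j, 2 * ((X * M) i j * starRingEnd ℂ (M i j)).re = 2 * ((X * M) i i).re * c := by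
    simp [hM, one_apply, apply_ite, mul_assoc]
  refine ((hasDerivAt_sum_normSq_exp_smul_mul_apply X M i).log
    (by rw [hsum]; positivity)).neg.congr_deriv ?_
  rw [hsum, hderiv]
  field_simp

end

theorem mul_mem_U21 {g h : Matrix (Fin 3) (Fin 3) ℂ} (hg : g ∈ U21) (hh : h ∈ U21) :
    g * h ∈ U21 := by
  change (g * h)ᴴ * Jmat * (g * h) = Jmat
  calc (g * h)ᴴ * Jmat * (g * h) = hᴴ * (gᴴ * Jmat * g) * h := by
        simp only [conjTranspose_mul, mul_assoc]
    _ = Jmat := by rw [hg, hh]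

theorem nmat_mem_U21 (z : ℂ) (τ : ℝ) : nmat z τ ∈ U21 := by
  have h2 : Real.sqrt 2 * Real.sqrt 2 = 2 := Real.mul_self_sqrt (by norm_num)
  change (nmat z τ)ᴴ * Jmat * nmat z τ = Jmat
  ext i j
  fin_cases i <;> fin_cases j <;>
    simp [nmat, Jmat, mul_apply, Fin.sum_univ_three, Complex.ext_iff, normSq_apply]
  constructor
  · linear_combination (z.re * z.re + z.im * z.im) * h2
  · ring

theorem amat_mem_U21 (t : ℝ) : amat t ∈ U21 := by
  change (amat t)ᴴ * Jmat * amat t = Jmat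
  ext i j
  fin_cases i <;> fin_cases j <;>
    simp [amat, Jmat, mul_apply, Fin.sum_univ_three, -ofReal_exp, ← ofReal_mul,
      ← Real.exp_add] <;> ring

theorem exp_smul_mem_U21 {X : Matrix (Fin 3) (Fin 3) ℂ} (hX : Xᴴ * Jmat = -(Jmat * X)) (r : ℝ) :
    exp (r • X) ∈ U21 :=
  conjTranspose_exp_mul_mul_exp <| by
    rw [conjTranspose_smul, star_trivial, smul_mul_assoc, hX, mul_smul_comm, smul_neg]

theorem nmat_mul_amat_mul_apply_two (z : ℂ) (τ s : ℝ) (k : Matrix (Fin 3) (Fin 3) ℂ) (j : Fin 3) :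
    (nmat z τ * amat s * k) 2 j = Real.exp (-s / 2) * k 2 j := by
  simp [nmat, amat, mul_apply, Fin.sum_univ_three]

theorem mul_amat_apply_two (Y : Matrix (Fin 3) (Fin 3) ℂ) (t : ℝ) (i : Fin 3) :
    (Y * amat t) i 2 = Y i 2 * Real.exp (-t / 2) := by
  simp [amat, mul_apply, Fin.sum_univ_three]

section IwasawaA

variable {AA : Matrix (Fin 3) (Fin 3) ℂ → ℝ}
  {κ : Matrix (Fin 3) (Fin 3) ℂ → Matrix (Fin 3) (Fin 3) ℂ}

theorem exp_neg_A_eq_sum_normSq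
    (hdec : ∀ g ∈ U21, κ g ∈ K0 ∧ ∃ n ∈ Nset, g = n * amat (AA g) * κ g)
    {g : Matrix (Fin 3) (Fin 3) ℂ} (hg : g ∈ U21) :
    Real.exp (-AA g) = ∑ j, normSq (g 2 j) := by
  obtain ⟨hk, n, ⟨z, τ, rfl⟩, hgd⟩ := hdec g hg
  have hrow (j : Fin 3) : g 2 j = Real.exp (-AA g / 2) * κ g 2 j :=
    (congrArg (· 2 j) hgd).trans (nmat_mul_amat_mul_apply_two z τ _ _ j)
  calc Real.exp (-AA g) = Real.exp (-AA g / 2) ^ 2 * ∑ j, normSq (κ g 2 j) := by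
        rw [sum_normSq_apply_eq_one hk.2, mul_one, ← Real.exp_nat_mul]; ring_nf
    _ = ∑ j, normSq (g 2 j) := by
        simp only [Finset.mul_sum, hrow, normSq_mul, normSq_ofReal, sq]

theorem hasDerivAt_A_exp_smul_mul_nmat_mul_amat
    (hdec : ∀ g ∈ U21, κ g ∈ K0 ∧ ∃ n ∈ Nset, g = n * amat (AA g) * κ g)
    {X : Matrix (Fin 3) (Fin 3) ℂ} (hX : Xᴴ * Jmat = -(Jmat * X)) (z : ℂ) (τ t : ℝ) :
    HasDerivAt (fun r : ℝ => AA (exp (r • X) * nmat z τ * amat t))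
      (-(2 * ((X * nmat z τ) 2 2).re)) 0 := by
  have hA : (fun r : ℝ => AA (exp (r • X) * nmat z τ * amat t))
      = fun r => -Real.log (∑ j, normSq ((exp (r • X) * (nmat z τ * amat t)) 2 j)) := by
    funext r
    have hg := mul_mem_U21 (mul_mem_U21 (exp_smul_mem_U21 hX r) (nmat_mem_U21 z τ))
      (amat_mem_U21 t)
    rw [← mul_assoc, ← exp_neg_A_eq_sum_normSq hdec hg, Real.log_exp, neg_neg]
  have hrow (j : Fin 3) :
      (nmat z τ * amat t) 2 j = Real.exp (-t / 2) * (1 : Matrix (Fin 3) (Fin 3) ℂ) 2 j := by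
    simpa using nmat_mul_amat_mul_apply_two z τ t 1 j
  rw [hA]
  refine (hasDerivAt_neg_log_sum_normSq_exp_smul_mul (Real.exp_pos _).ne' hrow).congr_deriv ?_
  rw [← mul_assoc, mul_amat_apply_two, re_mul_ofReal]
  field_simp

end IwasawaA

theorem Xt1_conjTranspose_mul_Jmat : Xt1ᴴ * Jmat = -(Jmat * Xt1) := by
  ext i j; fin_cases i <;> fin_cases j <;> simp [Xt1, Jmat, mul_apply, Fin.sum_univ_three]

theorem Xt2_conjTranspose_mul_Jmat : Xt2ᴴ * Jmat = -(Jmat * Xt2) := by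
  ext i j; fin_cases i <;> fin_cases j <;> simp [Xt2, Jmat, mul_apply, Fin.sum_univ_three]

theorem Xt3_conjTranspose_mul_Jmat : Xt3ᴴ * Jmat = -(Jmat * Xt3) := by
  ext i j
  fin_cases i <;> fin_cases j <;> simp [Xt3, Jmat, mul_apply, Fin.sum_univ_three, map_ofNat]

theorem re_Xt1_mul_nmat_apply_two_two (z : ℂ) (τ : ℝ) : ((Xt1 * nmat z τ) 2 2).re = -z.im := by
  simp [Xt1, nmat, mul_apply, Fin.sum_univ_three]
  field_simp
  norm_num

theorem re_Xt2_mul_nmat_apply_two_two (z : ℂ) (τ : ℝ) : ((Xt2 * nmat z τ) 2 2).re = z.re := by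
  simp [Xt2, nmat, mul_apply, Fin.sum_univ_three]

theorem re_Xt3_mul_nmat_apply_two_two (z : ℂ) (τ : ℝ) : ((Xt3 * nmat z τ) 2 2).re = -τ / 2 := by
  simp [Xt3, nmat, mul_apply, Fin.sum_univ_three]
  ring

theorem gradient_of_A_projection_along_K_general
    (AA : Matrix (Fin 3) (Fin 3) ℂ → ℝ)
    (κ : Matrix (Fin 3) (Fin 3) ℂ → Matrix (Fin 3) (Fin 3) ℂ)
    (hdec : ∀ g ∈ U21, κ g ∈ K0 ∧ ∃ n ∈ Nset, g = n * amat (AA g) * κ g)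
    (z : ℂ) (τ t : ℝ) :
    deriv (fun r : ℝ => AA (NormedSpace.exp (r • Xt1) * nmat z τ * amat t)) 0 = 2 * z.im ∧
    deriv (fun r : ℝ => AA (NormedSpace.exp (r • Xt2) * nmat z τ * amat t)) 0 = -(2 * z.re) ∧
    deriv (fun r : ℝ => AA (NormedSpace.exp (r • Xt3) * nmat z τ * amat t)) 0 = τ ∧
    (2 * z.im)^2 + (-(2 * z.re))^2 + τ^2 = 4 * normSq z + τ^2 := by
  refine ⟨?_, ?_, ?_, by rw [normSq_apply]; ring⟩
  · rw [(hasDerivAt_A_exp_smul_mul_nmat_mul_amat hdec Xt1_conjTranspose_mul_Jmat z τ t).deriv,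
      re_Xt1_mul_nmat_apply_two_two]
    ring
  · rw [(hasDerivAt_A_exp_smul_mul_nmat_mul_amat hdec Xt2_conjTranspose_mul_Jmat z τ t).deriv,
      re_Xt2_mul_nmat_apply_two_two]
  · rw [(hasDerivAt_A_exp_smul_mul_nmat_mul_amat hdec Xt3_conjTranspose_mul_Jmat z τ t).deriv,
      re_Xt3_mul_nmat_apply_two_two]
    ring

theorem gradient_of_A_projection_along_K
    (AA : Matrix (Fin 3) (Fin 3) ℂ → ℝ)
    (κ : Matrix (Fin 3) (Fin 3) ℂ → Matrix (Fin 3) (Fin 3) ℂ)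
    (hdec : ∀ g ∈ U21, κ g ∈ K0 ∧ ∃ n ∈ Nset, g = n * amat (AA g) * κ g)
    (huniq : ∀ n ∈ Nset, ∀ n' ∈ Nset, ∀ (t t' : ℝ), ∀ k ∈ K0, ∀ k' ∈ K0,
      n * amat t * k = n' * amat t' * k' → t = t' ∧ k = k')
    (z : ℂ) (τ t : ℝ) :
    deriv (fun r : ℝ => AA (NormedSpace.exp (r • Xt1) * nmat z τ * amat t)) 0 = 2 * z.im ∧
    deriv (fun r : ℝ => AA (NormedSpace.exp (r • Xt2) * nmat z τ * amat t)) 0 = -(2 * z.re) ∧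
    deriv (fun r : ℝ => AA (NormedSpace.exp (r • Xt3) * nmat z τ * amat t)) 0 = τ ∧
    (2 * z.im)^2 + (-(2 * z.re))^2 + τ^2 = 4 * normSq z + τ^2 :=
  gradient_of_A_projection_along_K_general AA κ hdec z τ t

end
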